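/- arXiv:1810.06888 — 9 statements merged into one kernel-verified Lean document; each statement's English description precedes it below -/
import Mathlib

section
/- Let H be a real Hilbert space, a a symmetric continuous coercive bilinear form, f ∈ H*, and K ⊆ H closed convex nonempty. Define the energy E(v) = (1/2)a(v,v) - ⟨f,v⟩. Then u ∈ K minimizes E over K if and only if u satisfies the variational inequality a(u, v-u) ≥ ⟨f, v-u⟩ for all v ∈ K. -/
theorem stmt_2 {H : Type*} [NormedAddCommGroup H] [InnerProductSpace ℝ H] [CompleteSpace H]
    (a : H → H → ℝ) (α C : ℝ) (hα : 0 < α)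
    (hlin₁ : ∀ y, IsLinearMap ℝ (fun x => a x y))
    (hlin₂ : ∀ x, IsLinearMap ℝ (a x))
    (hsymm : ∀ x y, a x y = a y x)
    (hcoer : ∀ x, α * ‖x‖ ^ 2 ≤ a x x)
    (hbound : ∀ x y, |a x y| ≤ C * ‖x‖ * ‖y‖)
    (f : H →L[ℝ] ℝ)
    (K : Set H) (hKne : K.Nonempty) (hKcl : IsClosed K) (hKcv : Convex ℝ K)
    (E : H → ℝ) (hE : ∀ v, E v = (1 / 2) * a v v - f v)
    (u : H) (hu : u ∈ K) :
    (∀ v ∈ K, E u ≤ E v) ↔ (∀ v ∈ K, f (v - u) ≤ a u (v - u)) := by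
  have hMnn : ∀ w : H, 0 ≤ a w w := fun w =>
    le_trans (by positivity) (hcoer w)
  have key : ∀ (t : ℝ) (w : H), E (u + t • w)
      = E u + t * (a u w - f w) + t ^ 2 / 2 * a w w := by
    intro t w
    have h1 : a (u + t • w) (u + t • w)
        = a u u + t * a u w + t * a w u + t * (t * a w w) := by
      have e1 := (hlin₁ (u + t • w)).map_add u (t • w)
      have e2 := (hlin₁ (u + t • w)).map_smul t w
      have e3 := (hlin₂ u).map_add u (t • w)
      have e4 := (hlin₂ u).map_smul t w
      have e5 := (hlin₂ w).map_add u (t • w)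
      have e6 := (hlin₂ w).map_smul t w
      simp only [smul_eq_mul] at e1 e2 e3 e4 e5 e6
      rw [e1, e2, e3, e4, e5, e6]; ring
    have h2 : f (u + t • w) = f u + t * f w := by
      rw [map_add, map_smul]; simp
    rw [hE, hE, h1, h2, hsymm w u]; ring
  constructor
  · intro hmin v hv
    set w := v - u with hw
    by_contra hcon
    push_neg at hcon
    set d := f w - a u w with hd
    have hdpos : 0 < d := by simp [hd]; linarith
    set M := a w w with hM
    have hMnn' : 0 ≤ M := hMnn w
    set t : ℝ := d / (M + d) with ht
    have htpos : 0 < t := div_pos hdpos (by linarith)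
    have htle : t ≤ 1 := by
      rw [ht, div_le_one (by linarith)]; linarith
    have hmem : u + t • w ∈ K := by
      have : u + t • w = (1 - t) • u + t • v := by
        rw [hw]; module
      rw [this]
      exact hKcv hu hv (by linarith) htpos.le (by ring)
    have := hmin _ hmem
    rw [key t w] at this
    have hineq : d * t ≤ t ^ 2 / 2 * M := by nlinarith
    have hts : t * (M + d) = d := by
      rw [ht]; field_simp
    nlinarith [sq_nonneg t, mul_pos htpos hdpos]
  · intro hvi v hv
    have h := hvi v hv
    have hkey := key 1 (v - u)
    simp only [one_smul, one_pow] at hkey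
    have hvu : u + (v - u) = v := by abel
    rw [hvu] at hkey
    have := hMnn (v - u)
    rw [hkey]
    linarith
end

section
/- Let H be a real Hilbert space, a a symmetric continuous coercive bilinear form, f ∈ H*, j : H → ℝ convex, and E(v) = (1/2)a(v,v) - ⟨f,v⟩. Then u ∈ H satisfies E(u) + j(u) ≤ E(v) + j(v) for all v ∈ H if and only if a(u, v-u) + j(v) - j(u) ≥ ⟨f, v-u⟩ for all v ∈ H. -/
private lemma aux_le_zero {x c : ℝ} (hc : 0 ≤ c)
    (h : ∀ t : ℝ, 0 < t → t ≤ 1 → x ≤ t * c) : x ≤ 0 := by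
  by_contra h'
  push_neg at h'
  rcases eq_or_lt_of_le hc with hc0 | hc0
  · have := h 1 one_pos le_rfl
    rw [← hc0] at this
    linarith
  · have ht0 : 0 < min 1 (x / (2 * c)) := by
      apply lt_min one_pos
      positivity
    have := h _ ht0 (min_le_left _ _)
    have h2 : min 1 (x / (2 * c)) * c ≤ (x / (2 * c)) * c :=
      mul_le_mul_of_nonneg_right (min_le_right _ _) hc
    have h3 : (x / (2 * c)) * c = x / 2 := by
      field_simp
    linarith

theorem stmt_3 {H : Type*} [NormedAddCommGroup H] [InnerProductSpace ℝ H] [CompleteSpace H]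
    (a : H → H → ℝ) (α C : ℝ) (hα : 0 < α)
    (hlin₁ : ∀ y, IsLinearMap ℝ (fun x => a x y))
    (hlin₂ : ∀ x, IsLinearMap ℝ (a x))
    (hsymm : ∀ x y, a x y = a y x)
    (hcoer : ∀ x, α * ‖x‖ ^ 2 ≤ a x x)
    (hbound : ∀ x y, |a x y| ≤ C * ‖x‖ * ‖y‖)
    (f : H →L[ℝ] ℝ)
    (j : H → ℝ) (hj : ConvexOn ℝ Set.univ j)
    (E : H → ℝ) (hE : ∀ v, E v = (1 / 2) * a v v - f v)
    (u : H) :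
    (∀ v : H, E u + j u ≤ E v + j v) ↔
      (∀ v : H, f (v - u) ≤ a u (v - u) + j v - j u) := by
  have addl : ∀ x y z : H, a (x + y) z = a x z + a y z := fun x y z => (hlin₁ z).map_add x y
  have addr : ∀ x y z : H, a x (y + z) = a x y + a x z := fun x y z => (hlin₂ x).map_add y z
  have smull : ∀ (t : ℝ) (x y : H), a (t • x) y = t * a x y := fun t x y => (hlin₁ y).map_smul t x
  have smulr : ∀ (t : ℝ) (x y : H), a x (t • y) = t * a x y := fun t x y => (hlin₂ x).map_smul t y
  have expand : ∀ (t : ℝ) (d : H),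
      a (u + t • d) (u + t • d) = a u u + 2 * t * a u d + t ^ 2 * a d d := by
    intro t d
    simp only [addl, addr, smull, smulr, hsymm d u]
    ring
  have add : 0 ≤ a (0:H) (0:H) := by
    have := hcoer (0 : H)
    simpa using this
  constructor
  · intro hmin v
    set d := v - u with hd
    have key : ∀ t : ℝ, 0 < t → t ≤ 1 →
        f d - a u d - (j v - j u) ≤ t * (a d d / 2) := by
      intro t ht0 ht1
      have hw : u + t • d = (1 - t) • u + t • v := by
        rw [hd]; module
      have hjw : j (u + t • d) ≤ t * j v + (1 - t) * j u := by
        rw [hw]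
        have := hj.2 (Set.mem_univ u) (Set.mem_univ v)
          (by linarith : (0:ℝ) ≤ 1 - t) ht0.le (by ring)
        simp only [smul_eq_mul] at this
        linarith
      have hm := hmin (u + t • d)
      rw [hE, hE, expand, map_add, map_smul] at hm
      have hm' : 0 ≤ t * a u d + t ^ 2 / 2 * a d d - t * f d + t * (j v - j u) := by
        have : j (u + t • d) - j u ≤ t * (j v - j u) := by linarith
        simp only [smul_eq_mul] at hm
        nlinarith [hm, this]
      have ht' : 0 ≤ t * (a u d + t / 2 * a d d - f d + (j v - j u)) := by
        nlinarith [hm']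
      have h2 : 0 ≤ a u d + t / 2 * a d d - f d + (j v - j u) :=
        nonneg_of_mul_nonneg_right ht' ht0
      nlinarith [h2]
    have hdd : 0 ≤ a d d := le_trans (by positivity) (hcoer d)
    have := aux_le_zero (by linarith : (0:ℝ) ≤ a d d / 2) key
    linarith
  · intro hvi v
    have h := hvi v
    set d := v - u with hd
    have hv : v = u + (1:ℝ) • d := by rw [hd]; module
    have hEv : E v = E u + a u d + (1/2) * a d d - f d := by
      rw [hv, hE, hE, expand, map_add, map_smul]
      simp only [smul_eq_mul]
      ring
    have hdd : 0 ≤ a d d := le_trans (by positivity) (hcoer d)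
    have : E u + j u ≤ E v + j v := by
      rw [hEv]; linarith
    exact this
end

section
/- Let H be a real Hilbert space, a a continuous coercive bilinear form (coercivity constant α), f ∈ H*, j : H → ℝ convex. If u₁ and u₂ both satisfy the variational inequality of the second kind a(uᵢ, v - uᵢ) + j(v) - j(uᵢ) ≥ ⟨f, v - uᵢ⟩ for all v ∈ H, then u₁ = u₂. -/
/-!
Testing the inequality for `u₁` with `v = u₂` and the one for `u₂` with `v = u₁` and adding,
the `f`- and `j`-terms cancel and bilinearity leaves `a (u₁ - u₂) (u₁ - u₂) ≤ 0`;
coercivity then forces `u₁ = u₂`.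
-/

section

variable {𝕜 E : Type*} [Field 𝕜] [LinearOrder 𝕜] [IsStrictOrderedRing 𝕜]
  [AddCommGroup E] [Module 𝕜 E]

def IsVarIneqSolution (B : E →ₗ[𝕜] E →ₗ[𝕜] 𝕜) (f : E →ₗ[𝕜] 𝕜) (j : E → 𝕜) (u : E) : Prop :=
  ∀ v, f (v - u) ≤ B u (v - u) + j v - j u

theorem IsVarIneqSolution.apply_sub_sub_nonpos {B : E →ₗ[𝕜] E →ₗ[𝕜] 𝕜} {f : E →ₗ[𝕜] 𝕜}
    {j : E → 𝕜} {u₁ u₂ : E} (h₁ : IsVarIneqSolution B f j u₁)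
    (h₂ : IsVarIneqSolution B f j u₂) : B (u₁ - u₂) (u₁ - u₂) ≤ 0 := by
  have h₁₂ := h₁ u₂
  have h₂₁ := h₂ u₁
  rw [← neg_sub u₁ u₂, map_neg, map_neg] at h₁₂
  rw [map_sub B, LinearMap.sub_apply]
  linarith

end

theorem IsVarIneqSolution.eq_of_coercive {E : Type*} [NormedAddCommGroup E] [Module ℝ E]
    {B : E →ₗ[ℝ] E →ₗ[ℝ] ℝ} {f : E →ₗ[ℝ] ℝ} {j : E → ℝ} {u₁ u₂ : E} {α : ℝ} (hα : 0 < α)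
    (hcoer : ∀ x, α * ‖x‖ ^ 2 ≤ B x x)
    (h₁ : IsVarIneqSolution B f j u₁) (h₂ : IsVarIneqSolution B f j u₂) : u₁ = u₂ := by
  have hle : α * ‖u₁ - u₂‖ ^ 2 ≤ 0 := (hcoer _).trans (h₁.apply_sub_sub_nonpos h₂)
  have hsq : ‖u₁ - u₂‖ ^ 2 ≤ 0 := nonpos_of_mul_nonpos_right hle hα
  have hnorm : ‖u₁ - u₂‖ = 0 := pow_eq_zero_iff two_ne_zero |>.mp (le_antisymm hsq (sq_nonneg _))
  exact sub_eq_zero.mp (norm_eq_zero.mp hnorm)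

theorem stmt_4_general {H : Type*} [NormedAddCommGroup H] [InnerProductSpace ℝ H]
    (a : H → H → ℝ) (α : ℝ) (hα : 0 < α)
    (hlin₁ : ∀ y, IsLinearMap ℝ (fun x => a x y))
    (hlin₂ : ∀ x, IsLinearMap ℝ (a x))
    (hcoer : ∀ x, α * ‖x‖ ^ 2 ≤ a x x)
    (f : H →L[ℝ] ℝ)
    (j : H → ℝ)
    (u₁ u₂ : H)
    (h₁ : ∀ v : H, f (v - u₁) ≤ a u₁ (v - u₁) + j v - j u₁)
    (h₂ : ∀ v : H, f (v - u₂) ≤ a u₂ (v - u₂) + j v - j u₂) :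
    u₁ = u₂ := by
  let B : H →ₗ[ℝ] H →ₗ[ℝ] ℝ := LinearMap.mk₂ ℝ a
    (fun x₁ x₂ y => (hlin₁ y).map_add x₁ x₂) (fun c x y => (hlin₁ y).map_smul c x)
    (fun x y₁ y₂ => (hlin₂ x).map_add y₁ y₂) (fun c x y => (hlin₂ x).map_smul c y)
  exact IsVarIneqSolution.eq_of_coercive (B := B) (f := f.toLinearMap) hα hcoer h₁ h₂

theorem stmt_4 {H : Type*} [NormedAddCommGroup H] [InnerProductSpace ℝ H] [CompleteSpace H]
    (a : H → H → ℝ) (α C : ℝ) (hα : 0 < α)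
    (hlin₁ : ∀ y, IsLinearMap ℝ (fun x => a x y))
    (hlin₂ : ∀ x, IsLinearMap ℝ (a x))
    (hcoer : ∀ x, α * ‖x‖ ^ 2 ≤ a x x)
    (hbound : ∀ x y, |a x y| ≤ C * ‖x‖ * ‖y‖)
    (f : H →L[ℝ] ℝ)
    (j : H → ℝ) (hj : ConvexOn ℝ Set.univ j)
    (u₁ u₂ : H)
    (h₁ : ∀ v : H, f (v - u₁) ≤ a u₁ (v - u₁) + j v - j u₁)
    (h₂ : ∀ v : H, f (v - u₂) ≤ a u₂ (v - u₂) + j v - j u₂) :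
    u₁ = u₂ :=
  stmt_4_general a α hα hlin₁ hlin₂ hcoer f j u₁ u₂ h₁ h₂
end

section
/- Falk's lemma: Let H be a real Hilbert space, a a continuous coercive bilinear form with coercivity constant α and continuity constant C, K ⊆ H and K_h ⊆ K nonempty closed convex sets. Let u ∈ K satisfy a(u, v-u) ≥ ⟨f, v-u⟩ for all v ∈ K and u_h ∈ K_h satisfy a(u_h, v_h - u_h) ≥ ⟨f, v_h - u_h⟩ for all v_h ∈ K_h. Then for every v_h ∈ K_h: α‖u - u_h‖² ≤ ⟨f - Au, u - v_h⟩ + C‖u - u_h‖‖u - v_h‖, where A : H → H* is the operator ⟨Au, w⟩ = a(u, w). In particular, ‖u - u_h‖² ≤ C' ( ‖f - Au‖_{H*} ‖u - v_h‖ + ‖u - v_h‖² ) for a constant C' depending only on α and C. -/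
theorem stmt_5 {H : Type*} [NormedAddCommGroup H] [InnerProductSpace ℝ H] [CompleteSpace H]
    (a : H → H → ℝ) (α C : ℝ) (hα : 0 < α) (hC : 0 < C)
    (hlin₁ : ∀ y, IsLinearMap ℝ (fun x => a x y))
    (hlin₂ : ∀ x, IsLinearMap ℝ (a x))
    (hcoer : ∀ x, α * ‖x‖ ^ 2 ≤ a x x)
    (hbound : ∀ x y, |a x y| ≤ C * ‖x‖ * ‖y‖)
    (f : H →L[ℝ] ℝ)
    (A : H → (H →L[ℝ] ℝ)) (hA : ∀ x w, A x w = a x w)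
    (K Kh : Set H) (hKne : K.Nonempty) (hKcl : IsClosed K) (hKcv : Convex ℝ K)
    (hKhne : Kh.Nonempty) (hKhcl : IsClosed Kh) (hKhcv : Convex ℝ Kh)
    (hKhK : Kh ⊆ K)
    (u : H) (hu : u ∈ K) (huVI : ∀ v ∈ K, f (v - u) ≤ a u (v - u))
    (uh : H) (huh : uh ∈ Kh) (huhVI : ∀ vh ∈ Kh, f (vh - uh) ≤ a uh (vh - uh)) :
    (∀ vh ∈ Kh,
        α * ‖u - uh‖ ^ 2 ≤ (f - A u) (u - vh) + C * ‖u - uh‖ * ‖u - vh‖) ∧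
    (∃ C' > (0 : ℝ), ∀ vh ∈ Kh,
        ‖u - uh‖ ^ 2 ≤ C' * (‖f - A u‖ * ‖u - vh‖ + ‖u - vh‖ ^ 2)) := by
  have hsub1 : ∀ x y z : H, a (x - y) z = a x z - a y z := fun x y z => by
    simpa using (IsLinearMap.mk' _ (hlin₁ z)).map_sub x y
  have hadd2 : ∀ x y z : H, a x (y + z) = a x y + a x z := fun x y z =>
    (hlin₂ x).map_add y z
  have hsub2 : ∀ x y z : H, a x (y - z) = a x y - a x z := fun x y z => by
    simpa using (IsLinearMap.mk' _ (hlin₂ x)).map_sub y z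
  have key : ∀ vh ∈ Kh,
      α * ‖u - uh‖ ^ 2 ≤ (f - A u) (u - vh) + C * ‖u - uh‖ * ‖u - vh‖ := by
    intro vh hvh
    have h1 : f (uh - u) ≤ a u (uh - u) := huVI uh (hKhK huh)
    have h2 : f (vh - uh) ≤ a uh (vh - uh) := huhVI vh hvh
    have hcoer' : α * ‖u - uh‖ ^ 2 ≤ a (u - uh) (u - uh) := hcoer _
    have e1 : a (u - uh) (u - uh) = a u (u - uh) - a uh (u - uh) := hsub1 _ _ _
    have e2 : a uh (u - uh) = a uh (u - vh) + a uh (vh - uh) := by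
      rw [← hadd2, show u - vh + (vh - uh) = u - uh by abel]
    have e3 : a u (uh - u) = - a u (u - uh) := by
      rw [show uh - u = (uh - u) - 0 by abel]
      rw [hsub2]
      rw [show (uh - u : H) = 0 - (u - uh) by abel, hsub2]
      simp
    have e4 : f (uh - u) = - f (u - uh) := by
      rw [show uh - u = -(u - uh) by abel, map_neg]
    have e5 : f (u - uh) - f (vh - uh) = f (u - vh) := by
      rw [← map_sub, show u - uh - (vh - uh) = u - vh by abel]
    have e6 : a (u - uh) (u - vh) = a u (u - vh) - a uh (u - vh) := hsub1 _ _ _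
    have h3 : a (u - uh) (u - vh) ≤ C * ‖u - uh‖ * ‖u - vh‖ :=
      le_trans (le_abs_self _) (hbound _ _)
    have e7 : (f - A u) (u - vh) = f (u - vh) - a u (u - vh) := by
      simp [ContinuousLinearMap.sub_apply, hA]
    rw [e7]
    linarith [hcoer', h3]
  refine ⟨key, ⟨(2 * α + C ^ 2) / α ^ 2, by positivity, ?_⟩⟩
  intro vh hvh
  have hk := key vh hvh
  set X := ‖u - uh‖ with hX
  set Y := ‖u - vh‖ with hY
  have hXn : 0 ≤ X := norm_nonneg _
  have hYn : 0 ≤ Y := norm_nonneg _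
  have hNn : 0 ≤ ‖f - A u‖ := norm_nonneg _
  have hop : (f - A u) (u - vh) ≤ ‖f - A u‖ * Y :=
    le_trans (le_abs_self _) ((f - A u).le_opNorm _)
  have hk2 : α * X ^ 2 ≤ ‖f - A u‖ * Y + C * X * Y := by linarith
  rw [div_mul_eq_mul_div, le_div_iff₀ (by positivity)]
  nlinarith [sq_nonneg (α * X - C * Y), mul_nonneg (mul_nonneg hNn hYn) hα.le,
    mul_le_mul_of_nonneg_left hk2 hα.le, mul_nonneg hNn hYn, sq_nonneg Y,
    mul_nonneg (mul_nonneg hNn hYn) hα.le, mul_nonneg (sq_nonneg Y) hα.le]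
end

section
/- Equivalence of variational inequality and mixed formulation (abstract obstacle case): Let H be a real Hilbert space, a a continuous coercive bilinear form, f ∈ H*, Λ = {μ ∈ H* : ⟨μ, v⟩ ≥ 0 for all v ∈ H with v ∈ -P} for a closed convex cone P ⊆ H, χ ∈ H, and K = {v ∈ H : v - χ ∈ P}. Assume K is nonempty. Then u ∈ K solves a(u, v-u) ≥ ⟨f, v-u⟩ for all v ∈ K if and only if there exists λ ∈ Λ such that (a) a(u, v) + ⟨λ, v⟩ = ⟨f, v⟩ for all v ∈ H and (b) ⟨μ - λ, u⟩ ≤ ⟨μ - λ, χ⟩ for all μ ∈ Λ; in that case λ is uniquely determined by ⟨λ, v⟩ = ⟨f, v⟩ - a(u, v). -/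
theorem stmt_8 {H : Type*} [NormedAddCommGroup H] [InnerProductSpace ℝ H] [CompleteSpace H]
    (a : H → H → ℝ) (α C : ℝ) (hα : 0 < α)
    (hlin₁ : ∀ y, IsLinearMap ℝ (fun x => a x y))
    (hlin₂ : ∀ x, IsLinearMap ℝ (a x))
    (hcoer : ∀ x, α * ‖x‖ ^ 2 ≤ a x x)
    (hbound : ∀ x y, |a x y| ≤ C * ‖x‖ * ‖y‖)
    (f : H →L[ℝ] ℝ)
    (P : Set H) (hPcl : IsClosed P) (hPcv : Convex ℝ P)
    (hP0 : (0 : H) ∈ P) (hPcone : ∀ t : ℝ, 0 ≤ t → ∀ x ∈ P, t • x ∈ P)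
    (χ : H)
    (K : Set H) (hK : K = {v : H | v - χ ∈ P}) (hKne : K.Nonempty)
    (Λ : Set (H →L[ℝ] ℝ)) (hΛ : Λ = {μ : H →L[ℝ] ℝ | ∀ v : H, -v ∈ P → 0 ≤ μ v})
    (u : H) (hu : u ∈ K) :
    (∀ v ∈ K, f (v - u) ≤ a u (v - u)) ↔
      (∃! lam : H →L[ℝ] ℝ, lam ∈ Λ ∧
        (∀ v : H, a u v + lam v = f v) ∧
        (∀ μ ∈ Λ, (μ - lam) u ≤ (μ - lam) χ) ∧
        (∀ v : H, lam v = f v - a u v)) := by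
  subst hK hΛ
  have huχ : u - χ ∈ P := hu
  have hPadd : ∀ p ∈ P, ∀ q ∈ P, p + q ∈ P := by
    intro p hp q hq
    have h := hPcv hp hq (by norm_num : (0:ℝ) ≤ 1/2) (by norm_num : (0:ℝ) ≤ 1/2)
      (by norm_num)
    have h2 := hPcone 2 (by norm_num) _ h
    have : (2:ℝ) • ((1/2 : ℝ) • p + (1/2 : ℝ) • q) = p + q := by
      rw [smul_add, smul_smul, smul_smul]; norm_num
    rwa [this] at h2
  -- construct the multiplier
  set A : H →L[ℝ] ℝ := LinearMap.mkContinuous ((hlin₂ u).mk') (C * ‖u‖)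
    (fun v => by simpa [Real.norm_eq_abs] using hbound u v) with hA
  have hAv : ∀ v, A v = a u v := fun v => rfl
  set lam : H →L[ℝ] ℝ := f - A with hlam
  have hlamv : ∀ v, lam v = f v - a u v := fun v => by
    simp [hlam, hAv]
  constructor
  · intro hVI
    -- lam ∈ Λ
    have hmem : ∀ v : H, -v ∈ P → 0 ≤ lam v := by
      intro v hv
      have hK' : u + (-v) ∈ {v : H | v - χ ∈ P} := by
        have : u + (-v) - χ = (u - χ) + (-v) := by abel
        simpa [this] using hPadd _ huχ _ hv
      have h := hVI _ hK'
      have h2 : f (-v) ≤ a u (-v) := by simpa using h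
      have h3 : a u (-v) = -(a u v) := (hlin₂ u).map_neg v
      rw [hlamv]
      have : f (-v) = -(f v) := map_neg f v
      linarith
    -- lam (u - χ) = 0
    have h1 : 0 ≤ lam (χ - u) := hmem _ (by simpa using huχ)
    have hχK : χ ∈ {v : H | v - χ ∈ P} := by simp [hP0]
    have h2 : lam (χ - u) ≤ 0 := by
      have := hVI χ hχK
      rw [hlamv]; linarith
    have hlamuχ : lam u = lam χ := by
      have := map_sub lam χ u
      have h0 : lam (χ - u) = 0 := le_antisymm h2 h1
      rw [h0] at this; linarith
    refine ⟨lam, ⟨hmem, ?_, ?_, hlamv⟩, ?_⟩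
    · intro v; rw [hlamv]; ring
    · intro μ hμ
      have hμ0 : 0 ≤ μ (χ - u) := hμ _ (by simpa using huχ)
      have := map_sub μ χ u
      simp only [ContinuousLinearMap.sub_apply]
      linarith
    · intro l' ⟨_, _, _, h4⟩
      ext v; rw [h4 v, hlamv]
  · rintro ⟨l, ⟨hmem, heq, hb, -⟩, -⟩ v hv
    have h0 : ((0 : H →L[ℝ] ℝ) ∈ {μ : H →L[ℝ] ℝ | ∀ v : H, -v ∈ P → 0 ≤ μ v}) := by
      intro w _; simp
    have h2l : ((2:ℝ) • l ∈ {μ : H →L[ℝ] ℝ | ∀ v : H, -v ∈ P → 0 ≤ μ v}) := by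
      intro w hw
      have := hmem w hw
      simp only [ContinuousLinearMap.smul_apply, smul_eq_mul]
      linarith
    have hb0 := hb 0 h0
    have hb2 := hb _ h2l
    simp only [ContinuousLinearMap.sub_apply, ContinuousLinearMap.zero_apply,
      ContinuousLinearMap.smul_apply, smul_eq_mul] at hb0 hb2
    have hluχ : l u = l χ := by linarith
    have hvχ : v - χ ∈ P := hv
    have hlv : 0 ≤ l (χ - v) := hmem _ (by simpa using hvχ)
    have hsub1 := map_sub l χ v
    have hsub2 := map_sub l v u
    have := heq (v - u)
    linarith
end

section
/- Abstract a priori bound for mixed formulations: Let H, M be real Hilbert spaces, a continuous (constant C_a) coercive (constant α) on H, b : M × H → ℝ continuous (constant C_b). Let (u, λ) satisfy a(u,v) + b(λ,v) = ⟨f,v⟩ for all v ∈ H, and (u_h, λ_H) with u_h ∈ V_h ⊆ H, λ_H ∈ Λ_H ⊆ M satisfy a(u_h,v_h) + b(λ_H,v_h) = ⟨f,v_h⟩ for all v_h ∈ V_h. Then for every v_h ∈ V_h and μ_H ∈ Λ_H: α‖u - u_h‖² ≤ a(u_h - u, v_h - u) + b(λ_H - λ, v_h - u) - b(μ_H - λ,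 u_h - u) - b(μ - λ_H, u) - b(μ_H - λ, u) + ⟨μ_H - λ, w⟩ + ⟨μ - λ_H, w⟩, whenever the constraint inequalities b(ν - λ, u) ≤ ⟨ν - λ, w⟩ for ν ∈ Λ and b(ν_H - λ_H, u_h) ≤ ⟨ν_H - λ_H, w⟩ for ν_H ∈ Λ_H hold and μ ∈ Λ, μ_H ∈ Λ_H. -/
theorem stmt_9 {H M : Type*}
    [NormedAddCommGroup H] [InnerProductSpace ℝ H] [CompleteSpace H]
    [NormedAddCommGroup M] [InnerProductSpace ℝ M] [CompleteSpace M]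
    (a : H →L[ℝ] H →L[ℝ] ℝ) (α Ca Cb : ℝ) (hα : 0 < α)
    (hcoer : ∀ x, α * ‖x‖ ^ 2 ≤ a x x)
    (hCa : ∀ x y, |a x y| ≤ Ca * ‖x‖ * ‖y‖)
    (b c : M →L[ℝ] H →L[ℝ] ℝ)
    (hCb : ∀ μ v, |b μ v| ≤ Cb * ‖μ‖ * ‖v‖)
    (f : H →L[ℝ] ℝ) (w : H)
    (Λ ΛH : Set M) (hΛcl : IsClosed Λ) (hΛcv : Convex ℝ Λ)
    (hΛHcl : IsClosed ΛH) (hΛHcv : Convex ℝ ΛH) (hsub : ΛH ⊆ Λ)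
    (Vh : Submodule ℝ H) (hVh : IsClosed (Vh : Set H))
    (u : H) (lam : M) (hlam : lam ∈ Λ)
    (uh : H) (huh : uh ∈ Vh) (lamH : M) (hlamH : lamH ∈ ΛH)
    (heq : ∀ v : H, a u v + b lam v = f v)
    (heqh : ∀ vh ∈ Vh, a uh vh + b lamH vh = f vh)
    (hconstr : ∀ ν ∈ Λ, b (ν - lam) u ≤ c (ν - lam) w)
    (hconstrH : ∀ νH ∈ ΛH, b (νH - lamH) uh ≤ c (νH - lamH) w)
    (μ : M) (hμ : μ ∈ Λ) (μH : M) (hμH : μH ∈ ΛH)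
    (vh : H) (hvh : vh ∈ Vh) :
    α * ‖u - uh‖ ^ 2 ≤
      a (uh - u) (vh - u) + b (lamH - lam) (vh - u) - b (μH - lam) (uh - u)
        - b (μ - lamH) u - b (μH - lam) u + c (μH - lam) w + c (μ - lamH) w := by
  have h1 := heq (vh - uh)
  have h2 := heqh (vh - uh) (Vh.sub_mem hvh huh)
  have h3 := hconstr μ hμ
  have h4 := hconstrH μH hμH
  have h5 := hcoer (u - uh)
  simp only [map_sub, ContinuousLinearMap.sub_apply] at h1 h2 h3 h4 h5 ⊢
  linarith
end

section
/- A priori error estimate via Young's inequality: Under the hypotheses of the abstract mixed formulation error bound (continuous coercive a with constants C_a, α; continuous b with constant C_b; conforming Λ_H ⊆ Λ), there is a constant C depending only on α, C_a, C_b such that ‖u - u_h‖² ≤ C ( ‖u - v_h‖² + ‖λ - μ_H‖²_{M} + ‖λ - λ_H‖²_{M} + b(λ - μ_H, u) - ⟨λ - μ_H, w⟩ ) for all v_h ∈ V_h and μ_H ∈ Λ_H. -/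
set_option maxHeartbeats 1000000


theorem stmt_10 {H M : Type*}
    [NormedAddCommGroup H] [InnerProductSpace ℝ H] [CompleteSpace H]
    [NormedAddCommGroup M] [InnerProductSpace ℝ M] [CompleteSpace M]
    (a : H →L[ℝ] H →L[ℝ] ℝ) (α Ca Cb : ℝ) (hα : 0 < α)
    (hcoer : ∀ x, α * ‖x‖ ^ 2 ≤ a x x)
    (hCa : ∀ x y, |a x y| ≤ Ca * ‖x‖ * ‖y‖)
    (b c : M →L[ℝ] H →L[ℝ] ℝ)
    (hCb : ∀ μ v, |b μ v| ≤ Cb * ‖μ‖ * ‖v‖)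
    (f : H →L[ℝ] ℝ) (w : H)
    (Λ ΛH : Set M) (hΛcl : IsClosed Λ) (hΛcv : Convex ℝ Λ)
    (hΛHcl : IsClosed ΛH) (hΛHcv : Convex ℝ ΛH) (hsub : ΛH ⊆ Λ)
    (Vh : Submodule ℝ H) (hVh : IsClosed (Vh : Set H))
    (u : H) (lam : M) (hlam : lam ∈ Λ)
    (uh : H) (huh : uh ∈ Vh) (lamH : M) (hlamH : lamH ∈ ΛH)
    (heq : ∀ v : H, a u v + b lam v = f v)
    (hconstr : ∀ ν ∈ Λ, b (ν - lam) u ≤ c (ν - lam) w)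
    (heqh : ∀ vh ∈ Vh, a uh vh + b lamH vh = f vh)
    (hconstrH : ∀ νH ∈ ΛH, b (νH - lamH) uh ≤ c (νH - lamH) w) :
    ∃ C > (0 : ℝ), ∀ vh ∈ Vh, ∀ μH ∈ ΛH,
      ‖u - uh‖ ^ 2 ≤ C * (‖u - vh‖ ^ 2 + ‖lam - μH‖ ^ 2 + ‖lam - lamH‖ ^ 2
        + (b (lam - μH) u - c (lam - μH) w)) := by
  have hCb' : Cb ≤ max Cb 0 := le_max_left _ _
  have hCb0 : (0:ℝ) ≤ max Cb 0 := le_max_right _ _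
  refine ⟨(2*(Ca^2 + Cb^2 + α*(max Cb 0) + α))/α^2, ?_, ?_⟩
  · apply div_pos
    · nlinarith [sq_nonneg Ca, sq_nonneg Cb, mul_nonneg hα.le hCb0]
    · positivity
  · intro vh hvh μH hμH
    have h1 := hcoer (u - uh)
    have h2 := heq (vh - uh)
    have h3 := heqh (vh - uh) (Vh.sub_mem hvh huh)
    have h4 := hconstr lamH (hsub hlamH)
    have h5 := hconstrH μH hμH
    have h6 := hconstr μH (hsub hμH)
    have key : α * ‖u - uh‖^2 ≤ a (u - uh) (u - vh) + b (lamH - lam) (vh - u)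
        + b (lam - μH) (uh - u) + (b (lam - μH) u - c (lam - μH) w) := by
      simp only [map_sub, ContinuousLinearMap.sub_apply] at h1 h2 h3 h4 h5 ⊢
      linarith
    have hD0 : 0 ≤ b (lam - μH) u - c (lam - μH) w := by
      simp only [map_sub, ContinuousLinearMap.sub_apply] at h6 ⊢
      linarith
    have hA1 : a (u - uh) (u - vh) ≤ Ca * ‖u - uh‖ * ‖u - vh‖ :=
      le_trans (le_abs_self _) (hCa _ _)
    have hB1 : b (lamH - lam) (vh - u) ≤ Cb * ‖lam - lamH‖ * ‖u - vh‖ := by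
      have := le_trans (le_abs_self _) (hCb (lamH - lam) (vh - u))
      rwa [norm_sub_rev lamH, norm_sub_rev vh] at this
    have hB2 : b (lam - μH) (uh - u) ≤ Cb * ‖lam - μH‖ * ‖u - uh‖ := by
      have := le_trans (le_abs_self _) (hCb (lam - μH) (uh - u))
      rwa [norm_sub_rev uh] at this
    have step : α * ‖u - uh‖^2 ≤ Ca * ‖u - uh‖ * ‖u - vh‖
        + Cb * ‖lam - lamH‖ * ‖u - vh‖ + Cb * ‖lam - μH‖ * ‖u - uh‖
        + (b (lam - μH) u - c (lam - μH) w) := by linarith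
    have hE0 : 0 ≤ ‖u - uh‖ := norm_nonneg _
    have hA0 : 0 ≤ ‖u - vh‖ := norm_nonneg _
    have hL0 : 0 ≤ ‖lam - lamH‖ := norm_nonneg _
    have hM0 : 0 ≤ ‖lam - μH‖ := norm_nonneg _
    have y1 : α*Ca*‖u - uh‖*‖u - vh‖ ≤ α^2/4*‖u - uh‖^2 + Ca^2*‖u - vh‖^2 := by
      nlinarith [sq_nonneg (α*‖u - uh‖ - 2*Ca*‖u - vh‖)]
    have y2 : α*Cb*‖lam - μH‖*‖u - uh‖ ≤ α^2/4*‖u - uh‖^2 + Cb^2*‖lam - μH‖^2 := by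
      nlinarith [sq_nonneg (α*‖u - uh‖ - 2*Cb*‖lam - μH‖)]
    have y3 : α*Cb*‖lam - lamH‖*‖u - vh‖ ≤
        α*(max Cb 0)/2*(‖lam - lamH‖^2 + ‖u - vh‖^2) := by
      nlinarith [mul_nonneg (mul_nonneg (mul_nonneg hα.le (sub_nonneg.2 hCb')) hL0) hA0,
        mul_nonneg (mul_nonneg hα.le hCb0) (sq_nonneg (‖lam - lamH‖ - ‖u - vh‖))]
    have stepα := mul_le_mul_of_nonneg_left step hα.le
    have main0 : α^2*‖u - uh‖^2 ≤ 2*Ca^2*‖u - vh‖^2 + 2*Cb^2*‖lam - μH‖^2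
        + α*(max Cb 0)*(‖lam - lamH‖^2 + ‖u - vh‖^2)
        + 2*α*(b (lam - μH) u - c (lam - μH) w) := by linarith [stepα, y1, y2, y3]
    set N : ℝ := 2*(Ca^2 + Cb^2 + α*(max Cb 0) + α) with hN
    have t1 : (2*Ca^2 + α*(max Cb 0))*‖u - vh‖^2 ≤ N*‖u - vh‖^2 := by
      apply mul_le_mul_of_nonneg_right _ (sq_nonneg _)
      nlinarith [sq_nonneg Cb, hα.le]
    have t2 : 2*Cb^2*‖lam - μH‖^2 ≤ N*‖lam - μH‖^2 := by
      apply mul_le_mul_of_nonneg_right _ (sq_nonneg _)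
      nlinarith [sq_nonneg Ca, mul_nonneg hα.le hCb0, hα.le]
    have t3 : α*(max Cb 0)*‖lam - lamH‖^2 ≤ N*‖lam - lamH‖^2 := by
      apply mul_le_mul_of_nonneg_right _ (sq_nonneg _)
      nlinarith [sq_nonneg Ca, sq_nonneg Cb, hα.le]
    have t4 : 2*α*(b (lam - μH) u - c (lam - μH) w) ≤
        N*(b (lam - μH) u - c (lam - μH) w) := by
      apply mul_le_mul_of_nonneg_right _ hD0
      nlinarith [sq_nonneg Ca, sq_nonneg Cb, mul_nonneg hα.le hCb0]
    have main : α^2 * ‖u - uh‖^2 ≤ N *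
        (‖u - vh‖^2 + ‖lam - μH‖^2 + ‖lam - lamH‖^2
          + (b (lam - μH) u - c (lam - μH) w)) := by
      linarith [main0, t1, t2, t3, t4]
    rw [div_mul_eq_mul_div, le_div_iff₀ (by positivity)]
    linarith [main]
end

section
/- Discrete inf-sup implies Lagrange multiplier error bound: Let H, M be real Hilbert spaces, b : M × H → ℝ continuous bilinear with constant C_b, a : H × H → ℝ continuous bilinear with constant C_a. Suppose the discrete inf-sup condition holds: there is β̂ > 0 with β̂‖μ_H‖_M ≤ sup_{v_h ∈ V_h, v_h ≠ 0} b(μ_H, v_h)/‖v_h‖ for all μ_H ∈ M_H, where Λ_H ⊆ M_H. If a(u,v) + b(λ,v) = ⟨f,v⟩ for all v ∈ H and a(u_h,v_h) + b(λ_H,v_h) = ⟨f,v_h⟩ for all v_h ∈ V_h, then for every μ_H ∈ M_H: β̂‖λ_H - μ_H‖_M ≤ C_b‖λ - μ_H‖_M + C_a‖u - u_h‖, and consequently ‖λ - λ_H‖_M ≤ (1 + C_b/β̂)‖λ - μ_H‖_M + (C_a/β̂)‖u - u_h‖. -/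
theorem stmt_11 {H M : Type*}
    [NormedAddCommGroup H] [InnerProductSpace ℝ H] [CompleteSpace H]
    [NormedAddCommGroup M] [InnerProductSpace ℝ M] [CompleteSpace M]
    (a : H →L[ℝ] H →L[ℝ] ℝ) (Ca Cb β : ℝ) (hβ : 0 < β)
    (hCa : ∀ x y, |a x y| ≤ Ca * ‖x‖ * ‖y‖)
    (b : M →L[ℝ] H →L[ℝ] ℝ)
    (hCb : ∀ μ v, |b μ v| ≤ Cb * ‖μ‖ * ‖v‖)
    (f : H →L[ℝ] ℝ)
    (Vh : Submodule ℝ H) (hVh : IsClosed (Vh : Set H))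
    (MH : Submodule ℝ M) (hMH : IsClosed (MH : Set M))
    (hinfsup : ∀ μH ∈ MH, ∀ ε > (0 : ℝ),
      ∃ vh ∈ Vh, vh ≠ 0 ∧ (β - ε) * ‖μH‖ * ‖vh‖ ≤ b μH vh)
    (u : H) (lam : M) (uh : H) (huh : uh ∈ Vh) (lamH : M) (hlamH : lamH ∈ MH)
    (heq : ∀ v : H, a u v + b lam v = f v)
    (heqh : ∀ vh ∈ Vh, a uh vh + b lamH vh = f vh) :
    ∀ μH ∈ MH,
      β * ‖lamH - μH‖ ≤ Cb * ‖lam - μH‖ + Ca * ‖u - uh‖ ∧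
      ‖lam - lamH‖ ≤ (1 + Cb / β) * ‖lam - μH‖ + (Ca / β) * ‖u - uh‖ := by
  intro μH hμH
  set R : ℝ := Cb * ‖lam - μH‖ + Ca * ‖u - uh‖ with hR
  have hbound : ∀ vh ∈ Vh, b (lamH - μH) vh ≤ R * ‖vh‖ := by
    intro vh hvh
    have h1 : b (lamH - μH) vh = a (u - uh) vh + b (lam - μH) vh := by
      have h2 := heqh vh hvh
      have h3 := heq vh
      simp only [map_sub, ContinuousLinearMap.sub_apply]
      linarith
    have h4 := (abs_le.mp (hCa (u - uh) vh)).2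
    have h5 := (abs_le.mp (hCb (lam - μH) vh)).2
    rw [h1, hR]; nlinarith
  have key : β * ‖lamH - μH‖ ≤ R := by
    set N := ‖lamH - μH‖ with hN
    have hN0 : 0 ≤ N := norm_nonneg _
    refine le_of_forall_pos_le_add ?_
    intro δ hδ
    have hε : (0:ℝ) < δ / (N + 1) := by positivity
    obtain ⟨vh, hvh, hvne, hle⟩ := hinfsup (lamH - μH) (sub_mem hlamH hμH) _ hε
    have hvpos : 0 < ‖vh‖ := norm_pos_iff.mpr hvne
    have h6 : (β - δ / (N + 1)) * N * ‖vh‖ ≤ R * ‖vh‖ :=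
      le_trans hle (hbound vh hvh)
    have h7 : (β - δ / (N + 1)) * N ≤ R :=
      le_of_mul_le_mul_right (by linarith [h6]) hvpos
    have h8 : δ / (N + 1) * N ≤ δ := by
      rw [div_mul_eq_mul_div, div_le_iff₀ (by linarith)]
      nlinarith
    nlinarith
  refine ⟨key, ?_⟩
  have htri : ‖lam - lamH‖ ≤ ‖lam - μH‖ + ‖lamH - μH‖ := by
    calc ‖lam - lamH‖ ≤ ‖lam - μH‖ + ‖μH - lamH‖ := norm_sub_le_norm_sub_add_norm_sub _ _ _
      _ = ‖lam - μH‖ + ‖lamH - μH‖ := by rw [norm_sub_rev μH lamH]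
  have hfin : (1 + Cb / β) * ‖lam - μH‖ + Ca / β * ‖u - uh‖
      = (β * ‖lam - μH‖ + Cb * ‖lam - μH‖ + Ca * ‖u - uh‖) / β := by
    field_simp
  rw [hfin, le_div_iff₀ hβ]
  nlinarith [key, htri]
end

section
/- Uzawa algorithm convergence: Let H, M be real Hilbert spaces, A : H → H a bounded self-adjoint positive operator with αI ≤ A (coercivity constant α > 0), B : H → M bounded linear, Λ ⊆ M closed convex, and P_Λ the metric projection onto Λ. Consider the iteration: given λⁿ ∈ Λ, solve A uⁿ = f - B* λⁿ, then set λ^{n+1} = P_Λ(λⁿ + ρ(B uⁿ - g)). If (u, λ) is a fixed point (i.e., Au = f - B*λ and λ = P_Λ(λ + ρ(Bu - g))), then for 0 < ρ < 2α/‖B‖², the sequence λⁿ satisfies ‖λ^{n+1} - λ‖²_M ≤ ‖λⁿ - λ‖²_M - ρ(2α - ρ‖B‖²)‖uⁿ - u‖²_H, and hence uⁿ → u in H. -/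
open RealInnerProductSpace

theorem stmt_17 {H M : Type*}
    [NormedAddCommGroup H] [InnerProductSpace ℝ H] [CompleteSpace H]
    [NormedAddCommGroup M] [InnerProductSpace ℝ M] [CompleteSpace M]
    (A : H →L[ℝ] H) (α : ℝ) (hα : 0 < α)
    (hself : ∀ x y : H, ⟪A x, y⟫ = ⟪x, A y⟫)
    (hcoer : ∀ v : H, α * ‖v‖ ^ 2 ≤ ⟪A v, v⟫)
    (B : H →L[ℝ] M) (f : H) (g : M)
    (Λ : Set M) (hΛne : Λ.Nonempty) (hΛcl : IsClosed Λ) (hΛcv : Convex ℝ Λ)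
    (Pr : M → M) (hPrmem : ∀ m, Pr m ∈ Λ)
    (hPrproj : ∀ m, ∀ y ∈ Λ, ‖m - Pr m‖ ≤ ‖m - y‖)
    (ρ : ℝ) (hρ0 : 0 < ρ) (hρ : ρ * ‖B‖ ^ 2 < 2 * α)
    (useq : ℕ → H) (lseq : ℕ → M)
    (hu : ∀ n, A (useq n) = f - ContinuousLinearMap.adjoint B (lseq n))
    (hl : ∀ n, lseq (n + 1) = Pr (lseq n + ρ • (B (useq n) - g)))
    (u : H) (lam : M)
    (hufix : A u = f - ContinuousLinearMap.adjoint B lam)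
    (hlfix : lam = Pr (lam + ρ • (B u - g))) :
    (∀ n, ‖lseq (n + 1) - lam‖ ^ 2 ≤
        ‖lseq n - lam‖ ^ 2 - ρ * (2 * α - ρ * ‖B‖ ^ 2) * ‖useq n - u‖ ^ 2)
    ∧ Filter.Tendsto useq Filter.atTop (nhds u) := by
  -- variational characterization
  have hvar : ∀ m : M, ∀ w ∈ Λ, ⟪m - Pr m, w - Pr m⟫ ≤ 0 := by
    intro m w hw
    have hinf : ‖m - Pr m‖ = ⨅ w : Λ, ‖m - w‖ := by
      haveI : Nonempty Λ := hΛne.to_subtype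
      refine le_antisymm (le_ciInf fun w => hPrproj m w w.2) ?_
      exact ciInf_le ⟨0, fun _ ⟨_, h⟩ => h ▸ norm_nonneg _⟩ (⟨Pr m, hPrmem m⟩ : Λ)
    exact (norm_eq_iInf_iff_real_inner_le_zero hΛcv (hPrmem m)).1 hinf w hw
  -- nonexpansivity
  have hnonexp : ∀ x y : M, ‖Pr x - Pr y‖ ≤ ‖x - y‖ := by
    intro x y
    have h1 := hvar x (Pr y) (hPrmem y)
    have h2 := hvar y (Pr x) (hPrmem x)
    have key : ‖Pr x - Pr y‖ ^ 2 ≤ ⟪x - y, Pr x - Pr y⟫ := by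
      have hns : ‖Pr x - Pr y‖ ^ 2 = ⟪Pr x - Pr y, Pr x - Pr y⟫ :=
        (real_inner_self_eq_norm_sq _).symm
      rw [hns]
      simp only [inner_sub_left, inner_sub_right] at h1 h2 ⊢
      linarith [real_inner_comm x (Pr y), real_inner_comm x (Pr x),
        real_inner_comm y (Pr x), real_inner_comm y (Pr y), real_inner_comm (Pr x) (Pr y)]
    have cs := real_inner_le_norm (x - y) (Pr x - Pr y)
    nlinarith [norm_nonneg (Pr x - Pr y), norm_nonneg (x - y)]
  -- basic identity
  have hAv : ∀ n, A (useq n - u) = - ContinuousLinearMap.adjoint B (lseq n - lam) := by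
    intro n
    simp [map_sub, hu n, hufix]
  have hBv : ∀ n, ⟪lseq n - lam, B (useq n - u)⟫ ≤ -(α * ‖useq n - u‖ ^ 2) := by
    intro n
    have h1 : ⟪lseq n - lam, B (useq n - u)⟫ = ⟪ContinuousLinearMap.adjoint B (lseq n - lam), useq n - u⟫ := by
      rw [ContinuousLinearMap.adjoint_inner_left]
    rw [h1, ← neg_neg (ContinuousLinearMap.adjoint B (lseq n - lam)), ← hAv n]
    simp only [inner_neg_left]
    have := hcoer (useq n - u)
    linarith
  set c := ρ * (2 * α - ρ * ‖B‖ ^ 2) with hc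
  have hcpos : 0 < c := by
    apply mul_pos hρ0; linarith
  have main : ∀ n, ‖lseq (n + 1) - lam‖ ^ 2 ≤
      ‖lseq n - lam‖ ^ 2 - c * ‖useq n - u‖ ^ 2 := by
    intro n
    have hstep : lseq (n+1) - lam = Pr (lseq n + ρ • (B (useq n) - g)) - Pr (lam + ρ • (B u - g)) := by
      rw [hl n, ← hlfix]
    have hd : (lseq n + ρ • (B (useq n) - g)) - (lam + ρ • (B u - g))
        = (lseq n - lam) + ρ • (B (useq n - u)) := by
      simp [map_sub, smul_sub]
      abel
    have hle : ‖lseq (n+1) - lam‖ ≤ ‖(lseq n - lam) + ρ • (B (useq n - u))‖ := by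
      rw [hstep, ← hd]; exact hnonexp _ _
    have hsq : ‖(lseq n - lam) + ρ • (B (useq n - u))‖ ^ 2
        = ‖lseq n - lam‖ ^ 2 + 2 * ρ * ⟪lseq n - lam, B (useq n - u)⟫ + ρ^2 * ‖B (useq n - u)‖ ^ 2 := by
      rw [@norm_add_sq_real]
      rw [real_inner_smul_right, norm_smul]
      simp [abs_of_pos hρ0, mul_pow]
      ring
    have hBn : ‖B (useq n - u)‖ ^ 2 ≤ ‖B‖ ^ 2 * ‖useq n - u‖ ^ 2 := by
      have := B.le_opNorm (useq n - u)
      nlinarith [norm_nonneg (B (useq n - u)), norm_nonneg (useq n - u), B.opNorm_nonneg]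
    have h2 : ‖lseq (n+1) - lam‖ ^ 2 ≤ ‖(lseq n - lam) + ρ • (B (useq n - u))‖ ^ 2 := by
      nlinarith [norm_nonneg (lseq (n+1) - lam), norm_nonneg ((lseq n - lam) + ρ • (B (useq n - u)))]
    have := hBv n
    nlinarith [sq_nonneg ρ]
  refine ⟨main, ?_⟩
  -- convergence
  set a : ℕ → ℝ := fun n => ‖lseq n - lam‖ ^ 2 with ha
  have hanti : Antitone a := by
    refine antitone_nat_of_succ_le fun n => ?_
    have := main n
    have h0 : 0 ≤ c * ‖useq n - u‖ ^ 2 := mul_nonneg hcpos.le (sq_nonneg _)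
    simp only [ha]; linarith
  have habd : BddBelow (Set.range a) := ⟨0, by rintro x ⟨n, rfl⟩; exact sq_nonneg _⟩
  have hconv : Filter.Tendsto a Filter.atTop (nhds (⨅ n, a n)) :=
    tendsto_atTop_ciInf hanti habd
  have hsub : Filter.Tendsto (fun n => a n - a (n+1)) Filter.atTop (nhds 0) := by
    have := hconv.sub (hconv.comp (Filter.tendsto_add_atTop_nat 1))
    simpa using this
  have hsq0 : Filter.Tendsto (fun n => ‖useq n - u‖ ^ 2) Filter.atTop (nhds 0) := by
    have hle : ∀ n, ‖useq n - u‖ ^ 2 ≤ (a n - a (n+1)) / c := by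
      intro n
      rw [le_div_iff₀ hcpos]
      have := main n
      simp only [ha]; linarith
    have hdiv : Filter.Tendsto (fun n => (a n - a (n+1)) / c) Filter.atTop (nhds 0) := by
      simpa using hsub.div_const c
    exact squeeze_zero (fun n => sq_nonneg _) hle hdiv
  have hn0 : Filter.Tendsto (fun n => ‖useq n - u‖) Filter.atTop (nhds 0) := by
    have := hsq0.sqrt
    simp only [Real.sqrt_zero] at this
    refine this.congr fun n => ?_
    rw [Real.sqrt_sq (norm_nonneg _)]
  rw [tendsto_iff_norm_sub_tendsto_zero]
  exact hn0
end
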